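/- arXiv:2302.11736 — 2 statements merged into one kernel-verified Lean document; each statement's English description precedes it below -/
import Mathlib

section
/- Let d ≥ 3 and let m be an integer coprime to d with d/2 < m < d. Suppose G ⊆ S_d is a subgroup that contains a transposition, acts transitively on {1, ..., d}, and has a subgroup that acts trivially on {m+1, ..., d} and transitively on {1, ..., m}. Then G = S_d. -/
/-!
By Jordan's theorem a primitive permutation group containing a transposition is the full
symmetric group, so it suffices to show that `G` is primitive. Let `A = {1, …, m}` and let `B`
be a block. If some translate of `B` meets both `A` and its complement, it contains a point
fixed by `H`, so it is `H`-stable and hence contains `A`; having more than `d / 2` points, it is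
everything. Otherwise every translate of `B` lies in `A` or in its complement, so `|B|` divides
both `m` and `d`, hence `|B| = 1`.
-/

open MulAction Set
open scoped Pointwise

theorem Setoid.IsPartition.dvd_ncard {α : Type*} [Finite α] {P : Set (Set α)}
    (hP : Setoid.IsPartition P) {k : ℕ} {s : Set α} (h : ∀ t ∈ P, k ∣ (s ∩ t).ncard) :
    k ∣ s.ncard := by
  classical
  rw [hP.ncard_eq_finsum s, finsum_def]
  split_ifs
  · exact Finset.dvd_sum fun t _ => h t t.2
  · exact dvd_zero k

namespace MulAction

variable {G X : Type*} [Group G] [MulAction G X] {A B : Set X}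

theorem IsBlock.subset_of_mem_of_notMem (hB : IsBlock G B)
    (hA : ∀ x ∈ A, ∀ y ∈ A, ∃ g ∈ fixingSubgroup G Aᶜ, g • x = y)
    {x y : X} (hxA : x ∈ A) (hxB : x ∈ B) (hyA : y ∉ A) (hyB : y ∈ B) : A ⊆ B := by
  intro z hz
  obtain ⟨g, hg, rfl⟩ := hA x hxA z hz
  have hgy : g • y = y := (mem_fixingSubgroup_iff G).1 hg y hyA
  rw [← hB.smul_eq_of_mem hyB (hgy.symm ▸ hyB)]
  exact smul_mem_smul_set hxB

theorem isPreprimitive_of_fixingSubgroup_compl_transitive [Finite X] [IsPretransitive G X]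
    (hcop : A.ncard.Coprime (Nat.card X)) (hlarge : Nat.card X < 2 * A.ncard)
    (hA : ∀ x ∈ A, ∀ y ∈ A, ∃ g ∈ fixingSubgroup G Aᶜ, g • x = y) :
    IsPreprimitive G X := by
  refine ⟨fun {B} hB => ?_⟩
  rcases B.eq_empty_or_nonempty with rfl | hBne
  · exact Or.inl subsingleton_empty
  by_cases hcross : ∃ g : G, ∃ x ∈ A, x ∈ g • B ∧ ∃ y ∉ A, y ∈ g • B
  · obtain ⟨g, x, hxA, hxB, y, hyA, hyB⟩ := hcross
    have hAB := (hB.translate g).subset_of_mem_of_notMem hA hxA hxB hyA hyB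
    refine Or.inr (smul_set_eq_univ.1 ((hB.translate g).eq_univ_of_card_lt ?_))
    have := ncard_le_ncard hAB
    omega
  · push Not at hcross
    refine Or.inl (ncard_le_one_iff_subsingleton.1 ?_)
    have hdvdA : B.ncard ∣ A.ncard := by
      refine (hB.isBlockSystem hBne).1.dvd_ncard ?_
      rintro _ ⟨g, rfl⟩
      by_cases hmeet : (A ∩ g • B).Nonempty
      · obtain ⟨x, hxA, hxB⟩ := hmeet
        have hBA : g • B ⊆ A := fun y hy =>
          by_contra fun hyA => (hcross g x hxA hxB y hyA hy).elim
        rw [inter_eq_right.2 hBA, ncard_smul_set]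
      · rw [not_nonempty_iff_eq_empty.1 hmeet, ncard_empty]
        exact dvd_zero _
    exact (Nat.Coprime.eq_one_of_dvd (hcop.coprime_dvd_left hdvdA) (hB.ncard_dvd_card hBne)).le

end MulAction

theorem stmt_3_general (d m : ℕ) (hcop : Nat.Coprime m d)
    (hm1 : d < 2 * m) (hm2 : m < d)
    (G : Subgroup (Equiv.Perm (Fin d)))
    (htrans : ∀ i j : Fin d, ∃ σ ∈ G, σ i = j)
    (hswap : ∃ σ ∈ G, σ.IsSwap)
    (H : Subgroup (Equiv.Perm (Fin d)))
    (hHG : H ≤ G)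
    (hfix : ∀ σ ∈ H, ∀ i : Fin d, m ≤ (i : ℕ) → σ i = i)
    (hHtrans : ∀ i j : Fin d, (i : ℕ) < m → (j : ℕ) < m → ∃ σ ∈ H, σ i = j) :
    G = ⊤ := by
  have : IsPretransitive G (Fin d) := ⟨fun i j => by
    obtain ⟨σ, hσ, hσij⟩ := htrans i j
    exact ⟨⟨σ, hσ⟩, hσij⟩⟩
  set A : Set (Fin d) := {i | (i : ℕ) < m}
  have hA : A.ncard = m := by
    rw [ncard_eq_toFinset_card', Set.toFinset_ofPred, Fin.card_filter_val_lt]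
    omega
  have hprim : IsPreprimitive G (Fin d) := by
    refine isPreprimitive_of_fixingSubgroup_compl_transitive (A := A)
      (by simpa [hA]) (by simpa [hA]) fun x hx y hy => ?_
    obtain ⟨σ, hσ, hσxy⟩ := hHtrans x y hx hy
    exact ⟨⟨σ, hHG hσ⟩,
      (mem_fixingSubgroup_iff G).2 fun i hi => hfix σ hσ i (not_lt.1 hi), hσxy⟩
  obtain ⟨σ, hσG, hσ⟩ := hswap
  exact Equiv.Perm.subgroup_eq_top_of_isPreprimitive_of_isSwap_mem hprim σ hσ hσG

/-- Lemma 2.4 of Benedetto–Juul: a transitive subgroup of `S_d` containing a transposition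
and containing a subgroup acting trivially on `{m+1,...,d}` and transitively on `{1,...,m}`,
where `gcd(m,d) = 1` and `d/2 < m < d`, is all of `S_d`. -/
theorem stmt_3 (d m : ℕ) (hd : 3 ≤ d) (hcop : Nat.Coprime m d)
    (hm1 : d < 2 * m) (hm2 : m < d)
    (G : Subgroup (Equiv.Perm (Fin d)))
    (htrans : ∀ i j : Fin d, ∃ σ ∈ G, σ i = j)
    (hswap : ∃ σ ∈ G, σ.IsSwap)
    (H : Subgroup (Equiv.Perm (Fin d)))
    (hHG : H ≤ G)
    (hfix : ∀ σ ∈ H, ∀ i : Fin d, m ≤ (i : ℕ) → σ i = i)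
    (hHtrans : ∀ i j : Fin d, (i : ℕ) < m → (j : ℕ) < m → ∃ σ ∈ H, σ i = j) :
    G = ⊤ :=
  stmt_3_general d m hcop hm1 hm2 G htrans hswap H hHG hfix hHtrans
end

section
/- Let K be a number field with ring of integers O_K, let π ∈ O_K be a prime element dividing d, let β be transcendental over K, and let f̄(x) = x^d - (d/(d-1))·β·x^{d-1} + π ∈ K[β][x]. Then for every n ≥ 1, the polynomial f̄^n(β) ∈ K[β] in the variable β is Eisenstein at π: its leading coefficient has π-valuation 0, its constant coefficient has π-valuation exactly 1, and all other coefficients have π-valuation at least 1. -/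
open Polynomial NumberField IsDedekindDomain Multiplicative

/-!
Modulo `π`, the iterate `p = f̄^n(β)` is a unit times `β ^ deg p`. Since `π ∣ d` and `d - 1` is a
`π`-adic unit, the middle term of `f̄` vanishes modulo `π`, so `f̄(p) ≡ p ^ d` is again a unit times
a power of `β`. Its constant term is `p(0) ^ d + π` with `v_π (p(0) ^ d) ≥ d ≥ 2`, so it has
valuation exactly `1`. Starting from `p = β`, induction on `n` gives the claim.
-/

namespace Polynomial

section CoeffBounds

variable {R Γ₀ : Type*} [CommRing R] [LinearOrderedCommMonoidWithZero Γ₀] (v : Valuation R Γ₀)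

theorem valuation_coeff_C_le (c : R) (k : ℕ) : v ((C c).coeff k) ≤ v c := by
  rw [coeff_C]; split_ifs <;> simp

theorem valuation_coeff_C_mul_X_le (c : R) (k : ℕ) : v ((C c * X).coeff k) ≤ v c := by
  rw [coeff_C_mul_X]; split_ifs <;> simp

theorem valuation_coeff_mul_le {p q : R[X]} {a b : Γ₀} (hp : ∀ i, v (p.coeff i) ≤ a)
    (hq : ∀ j, v (q.coeff j) ≤ b) (k : ℕ) : v ((p * q).coeff k) ≤ a * b := by
  rw [coeff_mul]
  exact v.map_sum_le fun i _ ↦ (v.map_mul _ _).trans_le (mul_le_mul' (hp _) (hq _))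

theorem valuation_coeff_pow_le {p : R[X]} {a : Γ₀} (hp : ∀ i, v (p.coeff i) ≤ a) (m k : ℕ) :
    v ((p ^ m).coeff k) ≤ a ^ m := by
  induction m generalizing k with
  | zero => rw [pow_zero, pow_zero, coeff_one]; split_ifs <;> simp
  | succ m ih => rw [pow_succ, pow_succ]; exact valuation_coeff_mul_le v ih hp k

variable {γ : Γ₀}

theorem valuation_coeff_mul_le_of_lt_add {p q : R[X]} {D E : ℕ}
    (hp : ∀ i, v (p.coeff i) ≤ 1) (hq : ∀ j, v (q.coeff j) ≤ 1)
    (hpD : ∀ i < D, v (p.coeff i) ≤ γ) (hqE : ∀ j < E, v (q.coeff j) ≤ γ)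
    {k : ℕ} (hk : k < D + E) : v ((p * q).coeff k) ≤ γ := by
  rw [coeff_mul]
  refine v.map_sum_le fun ij hij ↦ (v.map_mul _ _).trans_le ?_
  rw [Finset.HasAntidiagonal.mem_antidiagonal] at hij
  rcases lt_or_ge ij.1 D with hi | hi
  · simpa using mul_le_mul' (hpD _ hi) (hq ij.2)
  · simpa using mul_le_mul' (hp ij.1) (hqE _ (by omega))

theorem valuation_coeff_pow_le_of_lt_mul {p : R[X]} {D : ℕ}
    (hp : ∀ i, v (p.coeff i) ≤ 1) (hpD : ∀ i < D, v (p.coeff i) ≤ γ)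
    {m : ℕ} (hm : 1 ≤ m) {k : ℕ} (hk : k < m * D) : v ((p ^ m).coeff k) ≤ γ := by
  induction m, hm using Nat.le_induction generalizing k with
  | base => rw [pow_one]; exact hpD k (by omega)
  | succ m _ ih =>
    rw [pow_succ]
    exact valuation_coeff_mul_le_of_lt_add v (fun i ↦ (valuation_coeff_pow_le v hp m i).trans
      (one_pow m).le) hp (fun _ ↦ ih) hpD (by rwa [← add_one_mul])

end CoeffBounds

section FBar

variable {R Γ₀ : Type*} [CommRing R]

/-- Modulo the ideal `{x | v x ≤ γ}` of the valuation ring, `p` reduces to a unit times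
`X ^ p.natDegree`. -/
structure ReducesToMonomial [LinearOrderedCommMonoidWithZero Γ₀] (v : Valuation R Γ₀) (γ : Γ₀)
    (p : R[X]) : Prop where
  valuation_leadingCoeff : v p.leadingCoeff = 1
  valuation_coeff_le : ∀ {k}, k < p.natDegree → v (p.coeff k) ≤ γ

/-- The paper's `f̄(x) = x ^ d - c β x ^ (d - 1) + e` evaluated at `x = p`, where `β = X`. -/
noncomputable def fBar (d : ℕ) (c e : R) (p : R[X]) : R[X] :=
  p ^ d - C c * X * p ^ (d - 1) + C e

variable [LinearOrderedCommGroupWithZero Γ₀] {v : Valuation R Γ₀} {γ : Γ₀}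

theorem reducesToMonomial_X [Nontrivial R] : ReducesToMonomial v γ (X : R[X]) where
  valuation_leadingCoeff := by simp
  valuation_coeff_le {k} hk := by simp_all

namespace ReducesToMonomial

variable {p : R[X]} (hp : ReducesToMonomial v γ p)
include hp

theorem valuation_coeff_le_one (hγ : γ ≤ 1) (k : ℕ) : v (p.coeff k) ≤ 1 := by
  rcases lt_trichotomy k p.natDegree with hk | rfl | hk
  · exact (hp.valuation_coeff_le hk).trans hγ
  · exact hp.valuation_leadingCoeff.le
  · simp [coeff_eq_zero_of_natDegree_lt hk]

variable {d : ℕ} {c e : R} (hγ : γ < 1)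
include hγ

theorem valuation_coeff_C_mul_X_mul_pow_le (hc : v c ≤ γ) (k : ℕ) :
    v ((C c * X * p ^ (d - 1)).coeff k) ≤ γ := by
  simpa using valuation_coeff_mul_le v (fun i ↦ (valuation_coeff_C_mul_X_le v c i).trans hc)
    (valuation_coeff_pow_le v (hp.valuation_coeff_le_one hγ.le) (d - 1)) k

theorem natDegree_fBar (hc : v c ≤ γ) (hd : 1 ≤ d) (hD : 1 ≤ p.natDegree) :
    (fBar d c e p).natDegree = d * p.natDegree ∧ v (fBar d c e p).leadingCoeff = 1 := by
  have hle : (fBar d c e p).natDegree ≤ d * p.natDegree := by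
    have hcross : 1 + (d - 1) * p.natDegree ≤ d * p.natDegree := by
      obtain ⟨d, rfl⟩ := Nat.exists_eq_add_of_le' hd
      rw [add_one_mul, Nat.add_sub_cancel]
      omega
    refine natDegree_add_le_of_degree_le ((natDegree_sub_le _ _).trans (max_le ?_ ?_)) (by simp)
    · exact natDegree_pow_le_of_le d le_rfl
    · exact (natDegree_mul_le_of_le ((natDegree_C_mul_le c X).trans natDegree_X_le)
        (natDegree_pow_le_of_le (d - 1) le_rfl)).trans hcross
  have htop : v ((fBar d c e p).coeff (d * p.natDegree)) = 1 := by
    rw [fBar, coeff_add, coeff_sub, coeff_pow_mul_natDegree, coeff_C,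
      if_neg (Nat.mul_pos hd hD).ne', add_zero, v.map_sub_eq_of_lt_left] <;>
    rw [map_pow, hp.valuation_leadingCoeff, one_pow]
    exact (hp.valuation_coeff_C_mul_X_mul_pow_le hγ hc _).trans_lt hγ
  have hdeg := natDegree_eq_of_le_of_coeff_ne_zero hle fun h0 ↦ by simp [h0] at htop
  exact ⟨hdeg, by rwa [leadingCoeff, hdeg]⟩

theorem valuation_coeff_fBar_le (hc : v c ≤ γ) (hd : 1 ≤ d) (he : v e ≤ γ) {k : ℕ}
    (hk : k < d * p.natDegree) : v ((fBar d c e p).coeff k) ≤ γ := by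
  rw [fBar, coeff_add, coeff_sub]
  exact v.map_add_le (v.map_sub_le
    (valuation_coeff_pow_le_of_lt_mul v (hp.valuation_coeff_le_one hγ.le)
      (fun _ ↦ hp.valuation_coeff_le) hd hk)
    (hp.valuation_coeff_C_mul_X_mul_pow_le hγ hc k)) ((valuation_coeff_C_le v e k).trans he)

theorem valuation_coeff_zero_fBar (hd : 2 ≤ d) (hγ₀ : 0 < γ) (he : v e = γ)
    (hD : 1 ≤ p.natDegree) : v ((fBar d c e p).coeff 0) = γ := by
  have hpow : v ((p ^ d).coeff 0) < v e := by
    rw [coeff_zero_eq_eval_zero, eval_pow, ← coeff_zero_eq_eval_zero, map_pow, he]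
    exact (pow_le_pow_left₀ zero_le (hp.valuation_coeff_le hD) d).trans_lt
      (pow_lt_self_of_lt_one₀ hγ₀ hγ hd)
  rw [fBar, coeff_add, coeff_sub, mul_assoc, mul_coeff_zero, mul_coeff_zero, coeff_X_zero,
    zero_mul, mul_zero, sub_zero, coeff_C_zero, v.map_add_eq_of_lt_right hpow, he]

theorem fBar (hc : v c ≤ γ) (hd : 1 ≤ d) (he : v e ≤ γ) (hD : 1 ≤ p.natDegree) :
    ReducesToMonomial v γ (fBar d c e p) where
  valuation_leadingCoeff := (hp.natDegree_fBar hγ hc hd hD).2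
  valuation_coeff_le hk := hp.valuation_coeff_fBar_le hγ hc hd he <|
    (hp.natDegree_fBar hγ hc hd hD).1 ▸ hk

end ReducesToMonomial

end FBar

end Polynomial

namespace IsDedekindDomain.HeightOneSpectrum

variable {R K : Type*} [CommRing R] [IsDedekindDomain R] [Field K] [Algebra R K]
  [IsFractionRing R K] (v : HeightOneSpectrum R)

theorem valuation_div_sub_one_le {r : R} (hr : r ∈ v.asIdeal) :
    v.valuation K (algebraMap R K r / (algebraMap R K r - 1)) ≤ WithZero.exp (-1) := by
  have hr1 : r - 1 ∉ v.asIdeal := fun h ↦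
    v.isPrime.ne_top ((Ideal.eq_top_iff_one _).mpr (by simpa using sub_mem hr h))
  rw [map_div₀, ← map_one (algebraMap R K), ← map_sub,
    (valuation_eq_one_iff_notMem v).mpr hr1, div_one, valuation_of_algebraMap]
  simpa using (v.intValuation_le_pow_iff_mem r 1).mpr (by simpa using hr)

end IsDedekindDomain.HeightOneSpectrum

/-- Let `K` be a number field, `π ∈ O_K` a prime element dividing `d` (`d ≥ 2`), and
`f̄(x) = x^d - (d/(d-1))·β·x^{d-1} + π` over `K[β]`.  Then for every `n ≥ 1` the iterate
`f̄^n(β)`, as a polynomial `h n` in the variable `β` over `K`, is Eisenstein at `π`: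
it has degree `d^n`, its leading coefficient has `π`-adic valuation `0`, its constant
coefficient has `π`-adic valuation exactly `1`, and all other coefficients have
`π`-adic valuation at least `1`. -/
theorem stmt_5 (K : Type*) [Field K] [NumberField K]
    (d : ℕ) (hd : 2 ≤ d)
    (π : 𝓞 K) (hπ : Prime π) (hπd : π ∣ (d : 𝓞 K))
    (h : ℕ → Polynomial K)
    (h0 : h 0 = X)
    (hrec : ∀ k : ℕ, h (k + 1) =
      (h k) ^ d - C ((d : K) / ((d : K) - 1)) * X * (h k) ^ (d - 1) +
        C (algebraMap (𝓞 K) K π))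
    (v : HeightOneSpectrum (𝓞 K)) (hv : v.asIdeal = Ideal.span {π}) :
    ∀ n : ℕ, 1 ≤ n →
      (h n).natDegree = d ^ n ∧
      v.valuation K ((h n).leadingCoeff) = 1 ∧
      v.valuation K ((h n).coeff 0) = ((ofAdd (-1 : ℤ) : Multiplicative ℤ) : WithZero (Multiplicative ℤ)) ∧
      (∀ k : ℕ, 0 < k → k < d ^ n →
        v.valuation K ((h n).coeff k) ≤ ((ofAdd (-1 : ℤ) : Multiplicative ℤ) : WithZero (Multiplicative ℤ))) := by
  have hγ : WithZero.exp (-1 : ℤ) < 1 := by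
    simpa using WithZero.exp_lt_exp.mpr (neg_one_lt_zero : (-1 : ℤ) < 0)
  have hπv : v.valuation K (algebraMap (𝓞 K) K π) = WithZero.exp (-1) := by
    rw [HeightOneSpectrum.valuation_of_algebraMap, v.intValuation_singleton hπ.ne_zero hv]
  have hcv : v.valuation K ((d : K) / ((d : K) - 1)) ≤ WithZero.exp (-1) := by
    have := v.valuation_div_sub_one_le (K := K) (hv ▸ Ideal.mem_span_singleton.mpr hπd)
    rwa [map_natCast] at this
  have hiter : ∀ n, (h n).natDegree = d ^ n ∧
      ReducesToMonomial (v.valuation K) (WithZero.exp (-1)) (h n) := by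
    intro n
    induction n with
    | zero => exact h0 ▸ ⟨natDegree_X, reducesToMonomial_X⟩
    | succ n ih =>
      have hD : 1 ≤ (h n).natDegree := ih.1 ▸ Nat.one_le_pow _ _ (by omega)
      rw [hrec, pow_succ', ← ih.1]
      exact ⟨(ih.2.natDegree_fBar hγ hcv (by omega) hD).1, ih.2.fBar hγ hcv (by omega) hπv.le hD⟩
  intro n hn
  obtain ⟨m, rfl⟩ := Nat.exists_eq_add_of_le' hn
  obtain ⟨hdeg, hred⟩ := hiter (m + 1)
  refine ⟨hdeg, hred.valuation_leadingCoeff, ?_, fun k _ hk ↦ hred.valuation_coeff_le (hdeg ▸ hk)⟩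
  rw [hrec]
  exact (hiter m).2.valuation_coeff_zero_fBar hγ hd WithZero.exp_pos hπv
    ((hiter m).1 ▸ Nat.one_le_pow _ _ (by omega))
end
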